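/- For all nonnegative integers l and k such that either k < l or k - l is odd, the stiffness entry vanishes: F_{lk} = ∫_{-1}^{1} φ_k''(ξ) · (d²/dξ²)[ω(ξ) φ_l(ξ)] dξ = 0. That is, the only possibly nonzero entries of the stiffness matrix F occur for k = l, l+2, l+4, …. -/

import Mathlib

open MeasureTheory

/-- The Chebyshev weight `ω(ξ) = (1 - ξ²)^(-1/2)`. -/
noncomputable def chebW (ξ : ℝ) : ℝ := (1 - ξ ^ 2) ^ (-(1 : ℝ) / 2)

/-- The degree-`k` Chebyshev polynomial of the first kind, as a function `ℝ → ℝ`. -/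
noncomputable def chebT (k : ℕ) (ξ : ℝ) : ℝ := (Polynomial.Chebyshev.T ℝ k).eval ξ

/-- The weighted inner product `⟨f, g⟩_ω = ∫_{-1}^{1} f(ξ) g(ξ) ω(ξ) dξ`. -/
noncomputable def ipw (f g : ℝ → ℝ) : ℝ := ∫ ξ in (-1 : ℝ)..1, f ξ * g ξ * chebW ξ

/-- The basis functions
`φ_k(ξ) = T_k(ξ) - (2(k+2)/(k+3)) T_{k+2}(ξ) + ((k+1)/(k+3)) T_{k+4}(ξ)`. -/
noncomputable def phiFun (k : ℕ) (ξ : ℝ) : ℝ :=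
  chebT k ξ - (2 * ((k : ℝ) + 2) / ((k : ℝ) + 3)) * chebT (k + 2) ξ
    + (((k : ℝ) + 1) / ((k : ℝ) + 3)) * chebT (k + 4) ξ

/-- The stiffness entry `F_{lk} = ∫_{-1}^{1} φ_k''(ξ) · (d²/dξ²)[ω(ξ) φ_l(ξ)] dξ`. -/
noncomputable def stiff (l k : ℕ) : ℝ :=
  ∫ ξ in (-1 : ℝ)..1,
    deriv (deriv (phiFun k)) ξ * deriv (deriv (fun x => chebW x * phiFun l x)) ξ

/-!
Since `φ_l` vanishes to second order at `±1`, `φ_l = (1 - ξ²)² q_l` for a polynomial `q_l`, so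
`ω φ_l = (1 - ξ²)^(3/2) q_l` and its first derivative vanish at `±1`. Integrating by parts twice
therefore gives `F_{lk} = ∫ φ_k'''' φ_l ω`. For `k < l` this is zero by orthogonality of the
Chebyshev polynomials: `φ_k''''` has degree at most `k`, while `φ_l` is a combination of `T_l`,
`T_{l+2}`, `T_{l+4}`. For `k - l` odd the integrand `φ_k'' (ω φ_l)''` is odd, because `φ_k` has
the parity of `k` and `ω` is even.
-/

open Polynomial Polynomial.Chebyshev Set

theorem deriv_apply_neg_of_apply_neg {𝕜 : Type*} [NontriviallyNormedField 𝕜] {f : 𝕜 → 𝕜}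
    {s : 𝕜} (hf : ∀ x, f (-x) = s * f x) (x : 𝕜) : deriv f (-x) = -s * deriv f x := by
  have h := deriv_comp_neg (f := f) (x := x)
  simp only [hf, deriv_const_mul_field'] at h
  linear_combination h

theorem deriv_deriv_apply_neg_of_apply_neg {𝕜 : Type*} [NontriviallyNormedField 𝕜]
    {f : 𝕜 → 𝕜} {s : 𝕜} (hf : ∀ x, f (-x) = s * f x) (x : 𝕜) :
    deriv (deriv f) (-x) = s * deriv (deriv f) x := by
  rw [deriv_apply_neg_of_apply_neg (deriv_apply_neg_of_apply_neg hf), neg_neg]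

theorem intervalIntegral_eq_zero_of_odd {E : Type*} [NormedAddCommGroup E] [NormedSpace ℝ E]
    {f : ℝ → E} (hf : Function.Odd f) (a : ℝ) : ∫ x in -a..a, f x = 0 := by
  have h := intervalIntegral.integral_comp_neg (a := -a) (b := a) f
  simp only [hf.eq, neg_neg, intervalIntegral.integral_neg] at h
  have h2 : (2 : ℝ) • ∫ x in -a..a, f x = 0 := by
    rw [two_smul]
    nth_rewrite 1 [← h]
    exact neg_add_cancel _
  exact (smul_eq_zero.mp h2).resolve_left two_ne_zero

theorem integral_mul_deriv_deriv_eq_deriv_deriv_mul_of_eq_zero {a b : ℝ} (hab : a ≤ b)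
    {u u' u'' v v' v'' : ℝ → ℝ} (hu : ∀ x, HasDerivAt u (u' x) x)
    (hu' : ∀ x, HasDerivAt u' (u'' x) x) (hu'' : Continuous u'')
    (hv : ContinuousOn v (Icc a b)) (hv' : ContinuousOn v' (Icc a b))
    (hvv' : ∀ x ∈ Ioo a b, HasDerivAt v (v' x) x) (hv'v'' : ∀ x ∈ Ioo a b, HasDerivAt v' (v'' x) x)
    (hv'' : IntervalIntegrable v'' volume a b)
    (hva : v a = 0) (hvb : v b = 0) (hv'a : v' a = 0) (hv'b : v' b = 0) :
    ∫ x in a..b, u x * v'' x = ∫ x in a..b, u'' x * v x := by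
  have hu'c : Continuous u' := continuous_iff_continuousAt.2 fun x => (hu' x).continuousAt
  have huc : Continuous u := continuous_iff_continuousAt.2 fun x => (hu x).continuousAt
  rw [← uIcc_of_le hab] at hv hv'
  have hIoo : Ioo (min a b) (max a b) = Ioo a b := by rw [min_eq_left hab, max_eq_right hab]
  rw [← hIoo] at hvv' hv'v''
  rw [intervalIntegral.integral_mul_deriv_eq_deriv_mul_of_hasDerivAt huc.continuousOn hv'
      (fun x _ => hu x) hv'v'' (hu'c.intervalIntegrable a b) hv'',
    intervalIntegral.integral_mul_deriv_eq_deriv_mul_of_hasDerivAt hu'c.continuousOn hv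
      (fun x _ => hu' x) hvv' (hu''.intervalIntegrable a b) hv'.intervalIntegrable]
  simp [hva, hvb, hv'a, hv'b]

noncomputable def weightedDeriv (a : ℝ) (q : ℝ[X]) : ℝ[X] :=
  (1 - X ^ 2) * derivative q - C (2 * a) * X * q

theorem hasDerivAt_one_sub_sq_rpow_mul_eval (a : ℝ) (q : ℝ[X]) {x : ℝ} (hx : 1 - x ^ 2 ≠ 0) :
    HasDerivAt (fun y => (1 - y ^ 2) ^ a * q.eval y)
      ((1 - x ^ 2) ^ (a - 1) * (weightedDeriv a q).eval x) x := by
  have hw : HasDerivAt (fun y : ℝ => 1 - y ^ 2) (-(2 * x)) x := by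
    simpa using (hasDerivAt_pow 2 x).const_sub 1
  refine ((hw.rpow_const (p := a) (Or.inl hx)).mul (q.hasDerivAt x)).congr_deriv ?_
  rw [Real.rpow_sub_one hx]
  simp only [weightedDeriv, eval_sub, eval_mul, eval_one, eval_pow, eval_X, eval_C]
  field_simp
  ring

theorem chebW_eq_sqrt_inv : chebW = fun x => √(1 - x ^ 2)⁻¹ := by
  funext x
  rcases le_or_gt 0 (1 - x ^ 2) with hx | hx
  · rw [chebW, Real.sqrt_inv, Real.sqrt_eq_rpow, ← Real.rpow_neg hx, neg_div]
  -- For a negative base, `Real.rpow` carries the factor `cos (-π / 2) = 0`.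
  · rw [chebW, Real.sqrt_eq_zero_of_nonpos (inv_nonpos.2 hx.le), Real.rpow_def_of_neg hx,
      show -(1 : ℝ) / 2 * Real.pi = -(Real.pi / 2) by ring, Real.cos_neg, Real.cos_pi_div_two,
      mul_zero]

theorem chebW_neg (x : ℝ) : chebW (-x) = chebW x := by
  simp [chebW]

theorem chebW_mul_one_sub_sq_sq {x : ℝ} (hx : 0 ≤ 1 - x ^ 2) :
    chebW x * (1 - x ^ 2) ^ 2 = (1 - x ^ 2) ^ (3 / 2 : ℝ) := by
  rw [chebW, ← Real.rpow_natCast (1 - x ^ 2) 2, ← Real.rpow_add' hx (by norm_num)]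
  norm_num

theorem intervalIntegrable_chebW_mul {f : ℝ → ℝ} (hf : ContinuousOn f (Icc (-1) 1)) :
    IntervalIntegrable (fun x => chebW x * f x) volume (-1) 1 := by
  rw [chebW_eq_sqrt_inv]
  exact intervalIntegrable_sqrt_one_sub_sq_inv.mul_continuousOn
    (by rwa [uIcc_of_le (by norm_num)])

theorem integral_chebW_mul_eq_integral_measureT (f : ℝ → ℝ) :
    ∫ x in -1..1, chebW x * f x = ∫ x, f x ∂measureT := by
  rw [integral_measureT, chebW_eq_sqrt_inv]
  simp only [mul_comm]

@[fun_prop]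
theorem integrable_eval_measureT (p : ℝ[X]) : Integrable (fun x => p.eval x) measureT :=
  integrable_measureT p.continuous.continuousOn

theorem integral_eval_X_pow_mul_T_measureT {j n : ℕ} (h : j < n) :
    ∫ x, (X ^ j * T ℝ n).eval x ∂measureT = 0 := by
  induction j generalizing n with
  | zero => simpa using integral_eval_T_real_measureT_of_ne_zero (n := n) (by omega)
  | succ j ih =>
    obtain ⟨m, rfl⟩ : ∃ m, n = m + 1 := ⟨n - 1, by omega⟩
    have hrec : (2 : ℝ[X]) * (X ^ (j + 1) * T ℝ (m + 1 : ℕ)) =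
        X ^ j * T ℝ (m + 2 : ℕ) + X ^ j * T ℝ m := by
      have h := T_mul_T (R := ℝ) ((m + 1 : ℕ) : ℤ) 1
      push_cast at h ⊢
      rw [T_one, add_sub_cancel_right, add_assoc, one_add_one_eq_two] at h
      linear_combination X ^ j * h
    have heval : ∀ x : ℝ, (X ^ (j + 1) * T ℝ (m + 1 : ℕ)).eval x =
        ((X ^ j * T ℝ (m + 2 : ℕ)).eval x + (X ^ j * T ℝ m).eval x) / 2 := fun x => by
      rw [← eval_add, ← hrec]
      simp only [eval_mul, eval_ofNat]
      ring
    simp only [heval]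
    rw [integral_div, integral_add (integrable_eval_measureT _) (integrable_eval_measureT _),
      ih (by omega), ih (by omega)]
    simp

theorem integral_eval_mul_T_measureT {p : ℝ[X]} {n : ℕ} (h : p.natDegree < n) :
    ∫ x, (p * T ℝ n).eval x ∂measureT = 0 := by
  rw [p.as_sum_range' n h]
  simp only [Finset.sum_mul, eval_finsetSum, ← C_mul_X_pow_eq_monomial, mul_assoc, eval_C_mul]
  rw [integral_finsetSum _ fun i _ => (integrable_eval_measureT _).const_mul _]
  refine Finset.sum_eq_zero fun i hi => ?_
  rw [integral_const_mul, integral_eval_X_pow_mul_T_measureT (Finset.mem_range.1 hi), mul_zero]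

theorem sq_X_sub_C_dvd_of_isRoot_derivative {K : Type*} [Field K] [CharZero K] {p : K[X]}
    {a : K} (h : p.IsRoot a) (h' : (derivative p).IsRoot a) : (X - C a) ^ 2 ∣ p := by
  rcases eq_or_ne p 0 with rfl | hp
  · exact dvd_zero _
  rw [← le_rootMultiplicity_iff hp]
  refine (lt_rootMultiplicity_iff_isRoot_iterate_derivative (n := 1) hp).2 fun m hm => ?_
  interval_cases m
  exacts [h, h']

theorem one_sub_X_sq_sq_dvd {K : Type*} [Field K] [CharZero K] {p : K[X]} (h₁ : p.IsRoot 1)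
    (h₁' : (derivative p).IsRoot 1) (h₂ : p.IsRoot (-1)) (h₂' : (derivative p).IsRoot (-1)) :
    (1 - X ^ 2) ^ 2 ∣ p := by
  have hsplit : (1 - X ^ 2 : K[X]) ^ 2 = (X - C 1) ^ 2 * (X - C (-1)) ^ 2 := by
    simp only [map_one, map_neg]
    ring
  have hcop : IsCoprime (X - C (1 : K)) (X - C (-1)) :=
    isCoprime_X_sub_C_of_isUnit_sub (by norm_num)
  rw [hsplit]
  exact hcop.pow.mul_dvd (sq_X_sub_C_dvd_of_isRoot_derivative h₁ h₁')
    (sq_X_sub_C_dvd_of_isRoot_derivative h₂ h₂')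

theorem integral_eval_mul_deriv_deriv_chebW_mul_eval (p : ℝ[X]) {P : ℝ[X]}
    (hP : (1 - X ^ 2) ^ 2 ∣ P) :
    ∫ x in -1..1, p.eval x * deriv (deriv fun y => chebW y * P.eval y) x =
      ∫ x in -1..1, (derivative (derivative p)).eval x * (chebW x * P.eval x) := by
  obtain ⟨q, rfl⟩ := hP
  set v : ℝ → ℝ := fun y => chebW y * ((1 - X ^ 2) ^ 2 * q).eval y
  set v' : ℝ → ℝ := fun y => (1 - y ^ 2) ^ (1 / 2 : ℝ) * (weightedDeriv (3 / 2) q).eval y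
  set v'' : ℝ → ℝ := fun y => chebW y * (weightedDeriv (1 / 2) (weightedDeriv (3 / 2) q)).eval y
  have hne : ∀ x ∈ Ioo (-1 : ℝ) 1, 1 - x ^ 2 ≠ 0 := fun x hx => by nlinarith [hx.1, hx.2]
  have hv_eq : EqOn v (fun y => (1 - y ^ 2) ^ (3 / 2 : ℝ) * q.eval y) (Icc (-1) 1) := by
    intro y hy
    simp only [v, eval_mul, eval_pow, eval_sub, eval_one, eval_X, ← mul_assoc]
    rw [chebW_mul_one_sub_sq_sq (by nlinarith [hy.1, hy.2])]
  have hvv' : ∀ x ∈ Ioo (-1 : ℝ) 1, HasDerivAt v (v' x) x := by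
    intro x hx
    have h := hasDerivAt_one_sub_sq_rpow_mul_eval (3 / 2) q (hne x hx)
    rw [show (3 / 2 : ℝ) - 1 = 1 / 2 by norm_num] at h
    exact h.congr_of_eventuallyEq (hv_eq.eventuallyEq_of_mem (Icc_mem_nhds hx.1 hx.2))
  have hv'v'' : ∀ x ∈ Ioo (-1 : ℝ) 1, HasDerivAt v' (v'' x) x := by
    intro x hx
    have h := hasDerivAt_one_sub_sq_rpow_mul_eval (1 / 2) (weightedDeriv (3 / 2) q) (hne x hx)
    rwa [show (1 / 2 : ℝ) - 1 = -1 / 2 by norm_num] at h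
  have hdd : EqOn (deriv (deriv v)) v'' (Ioo (-1) 1) := by
    intro x hx
    have h : deriv v =ᶠ[nhds x] v' :=
      Filter.eventually_of_mem (isOpen_Ioo.mem_nhds hx) fun y hy => (hvv' y hy).deriv
    rw [h.deriv_eq, (hv'v'' x hx).deriv]
  refine integral_mul_deriv_deriv_eq_deriv_deriv_mul_of_eq_zero (by norm_num)
    (fun x => p.hasDerivAt x) (fun x => (derivative p).hasDerivAt x)
    (derivative (derivative p)).continuous
    (ContinuousOn.congr (by fun_prop (disch := norm_num)) hv_eq) (by fun_prop (disch := norm_num))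
    hvv' (fun x hx => (hv'v'' x hx).congr_deriv (hdd hx).symm) ?_ ?_ ?_ ?_ ?_
  · rw [intervalIntegrable_iff_integrableOn_Ioo_of_le (by norm_num)]
    refine IntegrableOn.congr_fun ?_ hdd.symm measurableSet_Ioo
    rw [← intervalIntegrable_iff_integrableOn_Ioo_of_le (by norm_num)]
    exact intervalIntegrable_chebW_mul (by fun_prop)
  all_goals norm_num [v, v', chebW]

noncomputable def phiPoly (k : ℕ) : ℝ[X] :=
  T ℝ k - C (2 * ((k : ℝ) + 2) / ((k : ℝ) + 3)) * T ℝ (k + 2 : ℕ)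
    + C (((k : ℝ) + 1) / ((k : ℝ) + 3)) * T ℝ (k + 4 : ℕ)

theorem phiFun_eq_eval (k : ℕ) : phiFun k = fun x => (phiPoly k).eval x := by
  funext x
  simp [phiFun, phiPoly, chebT]

theorem phiFun_neg (k : ℕ) (x : ℝ) : phiFun k (-x) = (-1) ^ k * phiFun k x := by
  simp only [phiFun, chebT, T_eval_neg, Int.cast_negOnePow_natCast]
  ring

theorem natDegree_phiPoly_le (k : ℕ) : (phiPoly k).natDegree ≤ k + 4 := by
  have hT : ∀ n : ℕ, n ≤ k + 4 → (T ℝ n).natDegree ≤ k + 4 := fun n hn => by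
    rwa [natDegree_T, Int.natAbs_natCast]
  have h₂ := (natDegree_C_mul_le (2 * ((k : ℝ) + 2) / ((k : ℝ) + 3)) _).trans
    (hT (k + 2) (by omega))
  have h₄ := (natDegree_C_mul_le (((k : ℝ) + 1) / ((k : ℝ) + 3)) _).trans (hT (k + 4) le_rfl)
  exact natDegree_add_le_of_degree_le
    ((natDegree_sub_le_of_le (hT k (by omega)) h₂).trans (max_self _).le) h₄

theorem integral_eval_mul_phiPoly_measureT {p : ℝ[X]} {l : ℕ} (h : p.natDegree < l) :
    ∫ x, (p * phiPoly l).eval x ∂measureT = 0 := by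
  have hT : ∀ n : ℕ, l ≤ n → ∫ x, (p * T ℝ n).eval x ∂measureT = 0 := fun n hn =>
    integral_eval_mul_T_measureT (h.trans_le hn)
  simp only [phiPoly, mul_add, mul_sub, mul_left_comm p (C _), eval_add, eval_sub, eval_C_mul]
  rw [integral_add ?_ ?_, integral_sub ?_ ?_, integral_const_mul, integral_const_mul,
    hT l le_rfl, hT (l + 2) (by omega), hT (l + 4) (by omega)]
  · simp
  all_goals fun_prop

theorem phiPoly_eval_one (k : ℕ) : (phiPoly k).eval 1 = 0 := by
  simp only [phiPoly, eval_add, eval_sub, eval_C_mul, T_eval_one]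
  field_simp
  ring

theorem derivative_phiPoly_eval_one (k : ℕ) : (derivative (phiPoly k)).eval 1 = 0 := by
  simp only [phiPoly, derivative_add, derivative_sub, derivative_C_mul, eval_add, eval_sub,
    eval_C_mul, derivative_T_eval_one]
  push_cast
  field_simp
  ring

theorem one_sub_X_sq_sq_dvd_phiPoly (k : ℕ) : (1 - X ^ 2) ^ 2 ∣ phiPoly k := by
  have hneg : ∀ x, (phiPoly k).eval (-x) = (-1) ^ k * (phiPoly k).eval x := by
    simpa [phiFun_eq_eval] using phiFun_neg k
  have hderiv : ∀ x, (derivative (phiPoly k)).eval x = deriv (phiFun k) x := by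
    simp [phiFun_eq_eval]
  refine one_sub_X_sq_sq_dvd (phiPoly_eval_one k) (derivative_phiPoly_eval_one k) ?_ ?_
  · simp [IsRoot, hneg, phiPoly_eval_one]
  · rw [IsRoot, hderiv, deriv_apply_neg_of_apply_neg (phiFun_neg k), ← hderiv,
      derivative_phiPoly_eval_one, mul_zero]

theorem deriv_eval_eq (p : ℝ[X]) : deriv (fun x => p.eval x) = fun x => (derivative p).eval x :=
  funext fun _ => p.deriv

theorem stiff_eq_integral_measureT (l k : ℕ) :
    stiff l k = ∫ x, (derivative^[4] (phiPoly k) * phiPoly l).eval x ∂measureT := by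
  rw [stiff, phiFun_eq_eval, phiFun_eq_eval, deriv_eval_eq, deriv_eval_eq,
    integral_eval_mul_deriv_deriv_chebW_mul_eval _ (one_sub_X_sq_sq_dvd_phiPoly l),
    ← integral_chebW_mul_eq_integral_measureT]
  refine intervalIntegral.integral_congr fun x _ => ?_
  simp only [Function.iterate_succ_apply', Function.iterate_zero_apply, eval_mul]
  ring

theorem stiff_eq_zero_of_lt {l k : ℕ} (h : k < l) : stiff l k = 0 := by
  rw [stiff_eq_integral_measureT]
  refine integral_eval_mul_phiPoly_measureT ?_
  have := natDegree_iterate_derivative (phiPoly k) 4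
  have := natDegree_phiPoly_le k
  omega

theorem stiff_eq_zero_of_odd_add {l k : ℕ} (h : Odd (k + l)) : stiff l k = 0 := by
  have hφ := deriv_deriv_apply_neg_of_apply_neg (phiFun_neg k)
  have hωφ := deriv_deriv_apply_neg_of_apply_neg (f := fun x => chebW x * phiFun l x)
    (s := (-1) ^ l) fun x => by simp only [chebW_neg, phiFun_neg]; ring
  refine intervalIntegral_eq_zero_of_odd (fun x => ?_) 1
  rw [hφ, hωφ, mul_mul_mul_comm, ← pow_add, h.neg_one_pow]
  ring

/-- The stiffness entry `F_{lk}` vanishes whenever `k < l` or `k - l` is odd; i.e. the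
only possibly nonzero entries occur for `k = l, l+2, l+4, …`. -/
theorem stiff_vanishes (l k : ℕ) (h : (k : ℤ) < (l : ℤ) ∨ Odd ((k : ℤ) - (l : ℤ))) :
    stiff l k = 0 := by
  rcases h with hlt | hodd
  · exact stiff_eq_zero_of_lt (by exact_mod_cast hlt)
  · refine stiff_eq_zero_of_odd_add ?_
    have : Odd ((k : ℤ) + l) := by
      convert hodd.add_even (even_two_mul (l : ℤ)) using 1
      ring
    exact_mod_cast this
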